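/- arXiv:1504.07811 — 2 statements merged into one kernel-verified Lean document; each statement's English description precedes it below -/
import Mathlib

section
/- Let G be a graph containing a path P with end vertices a and b, with P given an orientation from a to b. If there is a vertex w on P, distinct from a and b, such that a is adjacent to the successor w⁺ of w and b is adjacent to w, then G contains a cycle through all vertices of P. -/
/-!
Split `P` at the edge `w w⁺` into `p : a ⟶ w` and `q : w⁺ ⟶ b`. The walk
`w⁺ ⟶q b → w ⟶p⁻¹ a` visits every vertex of `P` exactly once, so it is a path, and the edge
`a w⁺` closes it into a cycle: that edge cannot lie on the path, which has length at least two
because `w ≠ a`.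
-/

open SimpleGraph

/-- The degree of `v` in the graph `T`. -/
noncomputable def tdeg {V : Type*} (T : SimpleGraph V) (v : V) : ℕ :=
  {w | T.Adj v w}.ncard

/-- The set of leaves (end vertices, degree-one vertices) of `T`. -/
def leafSet {V : Type*} (T : SimpleGraph V) : Set V := {v | tdeg T v = 1}

/-- The set of branch vertices (degree at least three) of `T`. -/
def branchSet {V : Type*} (T : SimpleGraph V) : Set V := {v | 3 ≤ tdeg T v}

namespace SimpleGraph.Walk

variable {V : Type*} {G : SimpleGraph V}

theorem support_append_cons_reverse_perm {a w w' b : V} (p : G.Walk a w) (h : G.Adj w w')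
    (q : G.Walk w' b) (hb : G.Adj b w) :
    (q.append (cons hb p.reverse)).support.Perm (p.append (cons h q)).support := by
  simp only [support_append, support_cons, support_reverse, List.tail_cons]
  exact List.perm_append_comm.trans ((List.reverse_perm _).append_right _)

theorem IsPath.exists_isCycle_of_crossing {a w b : V} {p : G.Walk a w} {r : G.Walk w b}
    (hpr : (p.append r).IsPath) (hp : ¬p.Nil) (hr : ¬r.Nil)
    (ha : G.Adj a r.snd) (hb : G.Adj b w) :
    ∃ C : G.Walk a a, C.IsCycle ∧ ∀ v, v ∈ C.support ↔ v ∈ (p.append r).support := by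
  cases r with
  | nil => exact absurd .nil hr
  | cons h q =>
    rw [snd_cons] at ha
    have hperm := support_append_cons_reverse_perm p h q hb
    have hQ : (q.append (Walk.cons hb p.reverse)).IsPath :=
      .mk' (hperm.nodup_iff.2 hpr.support_nodup)
    refine ⟨Walk.cons ha _, (Walk.cons_isCycle_iff _ ha).2 ⟨hQ, fun he => ?_⟩, fun v => ?_⟩
    · have hlen := hQ.length_eq_one_of_mem_edges (Sym2.eq_swap ▸ he)
      simp only [length_append, length_cons, length_reverse] at hlen
      exact hp (length_eq_zero_iff.1 (by omega))
    · rw [support_cons, List.mem_cons, hperm.mem_iff]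
      exact or_iff_right_of_imp (by rintro rfl; exact start_mem_support _)

end SimpleGraph.Walk

/-- Rotation/crossing lemma: if `P` is an `a`-`b` path and there is an internal
vertex `w = P.getVert i` with `a` adjacent to its successor `w⁺` and `b`
adjacent to `w`, then `G` has a cycle through exactly the vertices of `P`. -/
theorem stmt_11 {V : Type*} (G : SimpleGraph V) (a b : V)
    (P : G.Walk a b) (hP : P.IsPath) (i : ℕ) (hi1 : 1 ≤ i) (hi2 : i + 1 ≤ P.length)
    (ha : G.Adj a (P.getVert (i + 1))) (hb : G.Adj b (P.getVert i)) :
    ∃ (u : V) (C : G.Walk u u), C.IsCycle ∧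
      ∀ v : V, v ∈ C.support ↔ v ∈ P.support := by
  rw [← P.append_take_drop_eq i] at hP ⊢
  have hp : ¬(P.take i).Nil := by rw [Walk.nil_take_iff, ← Walk.length_eq_zero_iff]; omega
  have hr : ¬(P.drop i).Nil := by rw [Walk.nil_drop_iff]; omega
  have ha' : G.Adj a (P.drop i).snd := by rwa [Walk.snd, Walk.drop_getVert]
  exact ⟨a, hP.exists_isCycle_of_crossing hp hr ha' hb⟩
end

section
/- If a connected graph G on n vertices satisfies σ₂ ≥ n − 2, then G has a spanning tree with at most one branch vertex. -/
open SimpleGraph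

/-!
Take a longest path `v₀ … v_{p-1}` of `G`; all neighbours of its ends lie on it. If `v₀ ~ v_{i+1}`
and `v_i ~ v_{p-1}`, then `v₀ … v_i v_{p-1} … v_{i+1}` closes up into a cycle through all path
vertices, and when `p < n` connectivity attaches an outside vertex to it, giving a longer path.
So for `p < n` there is no such crossing (for `i = 0` this says `v₀ ≁ v_{p-1}`), whence Ore's
count `deg v₀ + deg v_{p-1} ≤ p - 1`, and `σ₂ ≥ n - 2` forces `p ≥ n - 1`. The path together with
one edge to the remaining vertex, if any, is a connected spanning subgraph whose only possible
branch vertex is the attachment point, and its spanning trees inherit this.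
-/

namespace SimpleGraph

variable {V : Type*} {G H : SimpleGraph V}

lemma tdeg_mono [Finite V] (hHG : H ≤ G) (v : V) : tdeg H v ≤ tdeg G v :=
  Set.ncard_le_ncard (fun _ hw => hHG hw) (Set.toFinite _)

lemma branchSet_mono [Finite V] (hHG : H ≤ G) : branchSet H ⊆ branchSet G :=
  fun v hv => le_trans hv (tdeg_mono hHG v)

lemma Connected.exists_isTree_le_ncard_branchSet_le_one [Finite V] (hH : H.Connected)
    (hHG : H ≤ G) (hb : (branchSet H).ncard ≤ 1) :
    ∃ T ≤ G, T.IsTree ∧ (branchSet T).ncard ≤ 1 := by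
  obtain ⟨T, hTH, hT⟩ := hH.exists_isTree_le
  exact ⟨T, hTH.trans hHG, hT,
    (Set.ncard_le_ncard (branchSet_mono hTH) (Set.toFinite _)).trans hb⟩

def chainGraph (L : List V) : SimpleGraph V :=
  fromRel fun u v => ∃ i, ∃ h : i + 1 < L.length, L[i] = u ∧ L[i + 1] = v

variable {L : List V}

lemma chainGraph_le (hL : L.IsChain G.Adj) : chainGraph L ≤ G := by
  rintro u v ⟨-, ⟨i, hi, rfl, rfl⟩ | ⟨i, hi, rfl, rfl⟩⟩
  · exact List.isChain_iff_getElem.mp hL i hi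
  · exact (List.isChain_iff_getElem.mp hL i hi).symm

lemma mem_of_chainGraph_adj {u v : V} (h : (chainGraph L).Adj u v) : u ∈ L := by
  obtain ⟨-, ⟨i, hi, rfl, -⟩ | ⟨i, hi, -, rfl⟩⟩ := h
  · exact List.getElem_mem _
  · exact List.getElem_mem _

lemma chainGraph_reachable_getElem_zero {k : ℕ} (hk : k < L.length) :
    (chainGraph L).Reachable L[0] L[k] := by
  induction k with
  | zero => rfl
  | succ k ih =>
    refine (ih (by omega)).trans ?_
    by_cases h : L[k] = L[k + 1]
    · rw [h]
    · exact Adj.reachable ⟨h, Or.inl ⟨k, hk, rfl, rfl⟩⟩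

lemma chainGraph_reachable {u v : V} (hu : u ∈ L) (hv : v ∈ L) :
    (chainGraph L).Reachable u v := by
  obtain ⟨i, hi, rfl⟩ := List.getElem_of_mem hu
  obtain ⟨k, hk, rfl⟩ := List.getElem_of_mem hv
  exact (chainGraph_reachable_getElem_zero hi).symm.trans (chainGraph_reachable_getElem_zero hk)

lemma tdeg_chainGraph_le_two (hL : L.Nodup) (v : V) : tdeg (chainGraph L) v ≤ 2 := by
  by_cases hv : v ∈ L
  · obtain ⟨k, hk, rfl⟩ := List.getElem_of_mem hv
    have hsub :
        {w | (chainGraph L).Adj L[k] w} ⊆ (fun i => L.getD i L[k]) '' {k - 1, k + 1} := by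
      rintro w ⟨-, ⟨i, hi, hik, rfl⟩ | ⟨i, hi, rfl, hik⟩⟩
      · obtain rfl := hL.getElem_inj_iff.mp hik
        exact ⟨i + 1, by simp, List.getD_eq_getElem _ _ hi⟩
      · obtain rfl := hL.getElem_inj_iff.mp hik
        exact ⟨i, by simp, List.getD_eq_getElem _ _ _⟩
    calc tdeg (chainGraph L) L[k] ≤ ((fun i => L.getD i L[k]) '' {k - 1, k + 1}).ncard :=
          Set.ncard_le_ncard hsub (Set.toFinite _)
      _ ≤ ({k - 1, k + 1} : Set ℕ).ncard := Set.ncard_image_le (Set.toFinite _)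
      _ ≤ 2 := (Set.ncard_insert_le _ _).trans (by simp)
  · have : {w | (chainGraph L).Adj v w} = ∅ :=
      Set.eq_empty_of_forall_notMem fun w hw => hv (mem_of_chainGraph_adj hw)
    simp [tdeg, this]

lemma branchSet_chainGraph_sup_edge_subset {x y : V} (hL : L.Nodup) (hx : x ∉ L) :
    branchSet (chainGraph L ⊔ edge x y) ⊆ {y} := by
  intro u hu
  by_contra huy
  have : tdeg (chainGraph L ⊔ edge x y) u ≤ 2 := by
    by_cases hux : u = x
    · subst hux
      have hsub : {w | (chainGraph L ⊔ edge u y).Adj u w} ⊆ {y} := by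
        rintro w (hw | hw)
        · exact absurd (mem_of_chainGraph_adj hw) hx
        · simp_all [edge_adj]
      exact (Set.ncard_le_ncard hsub (Set.toFinite _)).trans (by simp)
    · have : {w | (chainGraph L ⊔ edge x y).Adj u w} = {w | (chainGraph L).Adj u w} := by
        ext w
        simp_all [edge_adj]
      unfold tdeg
      rw [this]
      exact tdeg_chainGraph_le_two hL u
  have : 3 ≤ tdeg (chainGraph L ⊔ edge x y) u := hu
  omega

lemma exists_isTree_le_ncard_branchSet_le_one_of_isChain [Fintype V] (hG : G.Connected) (hL : L.IsChain G.Adj)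
    (hnd : L.Nodup) (hL0 : L ≠ []) (hcard : Fintype.card V ≤ L.length + 1) :
    ∃ T ≤ G, T.IsTree ∧ (branchSet T).ncard ≤ 1 := by
  have hroot : L.head hL0 ∈ L := List.head_mem hL0
  by_cases hall : ∀ v, v ∈ L
  · refine Connected.exists_isTree_le_ncard_branchSet_le_one (H := chainGraph L)
      ((connected_iff_exists_forall_reachable _).mpr
        ⟨_, fun v => chainGraph_reachable hroot (hall v)⟩)
      (chainGraph_le hL) ?_
    have : branchSet (chainGraph L) = ∅ := Set.eq_empty_of_forall_notMem fun v hv => by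
      have : 3 ≤ tdeg (chainGraph L) v := hv
      have := tdeg_chainGraph_le_two hnd v
      omega
    simp [this]
  obtain ⟨x, hx⟩ := not_forall.mp hall
  have hx_unique : ∀ v, v ∉ L → v = x := by
    intro v hv
    by_contra hvx
    have := (List.nodup_cons.mpr ⟨by simp [hvx, hv], List.nodup_cons.mpr ⟨hx, hnd⟩⟩ :
      (v :: x :: L).Nodup).length_le_card
    simp only [List.length_cons] at this
    omega
  obtain ⟨w⟩ := hG.preconnected (L.head hL0) x
  obtain ⟨d, -, hy, hdx⟩ := w.exists_boundary_dart {v | v ∈ L} hroot hx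
  have hd : d.snd = x := hx_unique _ hdx
  refine Connected.exists_isTree_le_ncard_branchSet_le_one (H := chainGraph L ⊔ edge x d.fst) ?_
    (sup_le (chainGraph_le hL) ((edge_le_iff _).mpr (Or.inr (hd ▸ d.adj.symm))))
    ((Set.ncard_le_ncard (branchSet_chainGraph_sup_edge_subset hnd hx) (Set.toFinite _)).trans
      (by simp))
  refine (connected_iff_exists_forall_reachable _).mpr ⟨L.head hL0, fun v => ?_⟩
  have hreach {u : V} (hu : u ∈ L) : (chainGraph L ⊔ edge x d.fst).Reachable (L.head hL0) u :=
    (chainGraph_reachable hroot hu).mono le_sup_left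
  by_cases hv : v ∈ L
  · exact hreach hv
  · obtain rfl := hx_unique v hv
    refine (hreach hy).trans (Adj.reachable (Or.inr ?_))
    rw [edge_adj]
    exact ⟨Or.inr ⟨rfl, rfl⟩, hd ▸ d.adj.ne⟩

lemma exists_isChain_nodup_length_eq_succ_of_cycle (hG : G.Connected) {C : List V}
    (hC : Cycle.Chain G.Adj (C : Cycle V)) (hCn : C.Nodup) (hC0 : C ≠ []) {z : V} (hz : z ∉ C) :
    ∃ M : List V, M.IsChain G.Adj ∧ M.Nodup ∧ M.length = C.length + 1 := by
  obtain ⟨w⟩ := hG.preconnected (C.head hC0) z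
  obtain ⟨d, -, hdC, hdz⟩ := w.exists_boundary_dart {v | v ∈ C} (List.head_mem hC0) hz
  obtain ⟨C₁, C₂, rfl⟩ := List.append_of_mem hdC
  -- rotate the cycle so that it starts at `d.fst`, then cut it open before `d.fst`
  have hR : (d.fst :: (C₂ ++ C₁)).IsChain G.Adj := by
    rw [Cycle.coe_eq_coe.mpr List.isRotated_append, List.cons_append, Cycle.chain_coe_cons] at hC
    exact hC.prefix ⟨[d.fst], by simp⟩
  have hperm : (C₁ ++ d.fst :: C₂).Perm (d.fst :: (C₂ ++ C₁)) := List.perm_append_comm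
  exact ⟨d.snd :: d.fst :: (C₂ ++ C₁), hR.cons_cons d.adj.symm,
    List.nodup_cons.mpr ⟨fun h => hdz (hperm.mem_iff.mpr h), hperm.nodup_iff.mp hCn⟩,
    by simp [hperm.length_eq]⟩

lemma cycleChain_append_reverse {P Q : List V} (hPQ : (P ++ Q).IsChain G.Adj) (hP : P ≠ [])
    (hQ : Q ≠ []) (hlast : G.Adj (P.getLast hP) (Q.getLast hQ))
    (hhead : G.Adj (Q.head hQ) (P.head hP)) : Cycle.Chain G.Adj (P ++ Q.reverse : Cycle V) := by
  rw [Cycle.chain_ne_nil _ (by simp [hP]), List.getLast_append_of_ne_nil _ (by simpa using hQ),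
    List.getLast_reverse, ← List.cons_append]
  refine List.IsChain.append ?_
    (List.isChain_reverse.mpr (hPQ.right_of_append.imp fun _ _ h => h.symm)) ?_
  · obtain ⟨a, l, rfl⟩ := List.exists_cons_of_ne_nil hP
    exact hPQ.left_of_append.cons_cons hhead
  · simp only [List.head?_reverse, List.getLast?_cons, List.getLast?_eq_some_getLast hP,
      List.getLast?_eq_some_getLast hQ, Option.getD_some, Option.mem_def, Option.some.injEq]
    rintro _ rfl _ rfl
    exact hlast

lemma tdeg_eq_ncard_of_forall_adj_mem (hnd : L.Nodup) {v : V} (hv : ∀ w, G.Adj v w → w ∈ L) :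
    tdeg G v = {i | ∃ h : i < L.length, G.Adj v L[i]}.ncard := by
  symm
  refine Set.ncard_congr (fun i hi => L[i]'hi.1) (fun i hi => hi.2) ?_ ?_
  · intro i k _ _ h
    exact hnd.getElem_inj_iff.mp h
  · intro w hw
    obtain ⟨i, hi, rfl⟩ := List.getElem_of_mem (hv w hw)
    exact ⟨i, ⟨hi, hw⟩, rfl⟩

structure IsLongestPath (G : SimpleGraph V) (L : List V) : Prop where
  isChain : L.IsChain G.Adj
  nodup : L.Nodup
  length_le : ∀ M : List V, M.IsChain G.Adj → M.Nodup → M.length ≤ L.length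

lemma exists_isLongestPath [Fintype V] (G : SimpleGraph V) : ∃ L, G.IsLongestPath L := by
  let S : Set ℕ := {k | ∃ M : List V, M.IsChain G.Adj ∧ M.Nodup ∧ M.length = k}
  have hbdd : BddAbove S :=
    ⟨Fintype.card V, by rintro _ ⟨M, -, hM, rfl⟩; exact hM.length_le_card⟩
  obtain ⟨L, hL, hnd, hlen⟩ :=
    Nat.sSup_mem (s := S) ⟨0, [], List.isChain_nil, List.nodup_nil, rfl⟩ hbdd
  exact ⟨L, hL, hnd, fun M hM hMn => hlen ▸ le_csSup hbdd ⟨M, hM, hMn, rfl⟩⟩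

namespace IsLongestPath

variable (hL : G.IsLongestPath L)
include hL

lemma ne_nil [Nonempty V] : L ≠ [] := by
  obtain ⟨v⟩ := ‹Nonempty V›
  rintro rfl
  simpa using hL.length_le [v] (List.isChain_singleton v) (List.nodup_singleton v)

lemma reverse : G.IsLongestPath L.reverse :=
  ⟨List.isChain_reverse.mpr (hL.isChain.imp fun _ _ h => h.symm),
    List.nodup_reverse.mpr hL.nodup, by simpa using hL.length_le⟩

lemma mem_of_adj_head (h : 0 < L.length) {w : V} (hw : G.Adj L[0] w) : w ∈ L := by
  by_contra hwL
  obtain ⟨a, l, rfl⟩ := List.exists_cons_of_ne_nil (List.ne_nil_of_length_pos h)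
  have := hL.length_le (w :: a :: l) (hL.isChain.cons_cons hw.symm)
    (List.nodup_cons.mpr ⟨hwL, hL.nodup⟩)
  simp at this

lemma mem_of_adj_last (h : 0 < L.length) {w : V} (hw : G.Adj L[L.length - 1] w) : w ∈ L := by
  simpa using
    hL.reverse.mem_of_adj_head (by simpa using h) (by simpa [List.getElem_reverse] using hw)

lemma card_le_length_of_cycle [Fintype V] (hG : G.Connected) {C : List V}
    (hC : Cycle.Chain G.Adj (C : Cycle V)) (hCn : C.Nodup) (hC0 : C ≠ [])
    (hlen : C.length = L.length) : Fintype.card V ≤ L.length := by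
  by_contra! hlt
  obtain ⟨z, hz⟩ := Cardinal.exists_notMem_of_length_lt C
    (by rw [Cardinal.mk_fintype, hlen]; exact_mod_cast hlt)
  obtain ⟨M, hM, hMn, hMlen⟩ := exists_isChain_nodup_length_eq_succ_of_cycle hG hC hCn hC0 hz
  have := hL.length_le M hM hMn
  omega

lemma not_adj_of_crossing [Fintype V] (hG : G.Connected) (hlt : L.length < Fintype.card V)
    {i : ℕ} (hi : i + 1 < L.length) (h0 : G.Adj L[0] L[i + 1]) :
    ¬ G.Adj L[i] L[L.length - 1] := by
  intro hlast
  have hP : L.take (i + 1) ≠ [] := by simpa using List.ne_nil_of_length_pos (by omega)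
  have hQ : L.drop (i + 1) ≠ [] := by simp; omega
  have hcyc := cycleChain_append_reverse (by rw [List.take_append_drop]; exact hL.isChain) hP hQ
    (by
      rw [List.getLast_drop, List.getLast_take, List.getElem?_eq_getElem (by omega),
        Option.getD_some, List.getLast_eq_getElem]
      simpa using hlast)
    (by simpa [List.head_take, List.head_eq_getElem] using h0.symm)
  have hperm : (L.take (i + 1) ++ (L.drop (i + 1)).reverse).Perm L := by
    simpa using (List.reverse_perm (L.drop (i + 1))).append_left (L.take (i + 1))
  have := hL.card_le_length_of_cycle hG hcyc (hperm.nodup_iff.mpr hL.nodup) (by simp [hP])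
    hperm.length_eq
  omega

lemma tdeg_add_tdeg_lt [Fintype V] (hG : G.Connected) (hlt : L.length < Fintype.card V)
    (h1 : 1 < L.length) : tdeg G L[0] + tdeg G L[L.length - 1] < L.length := by
  set p := L.length
  set A := {i | ∃ h : i < p, G.Adj L[0] L[i]}
  set B := {i | ∃ h : i < p, G.Adj L[p - 1] L[i]}
  have hA : tdeg G L[0] = A.ncard :=
    tdeg_eq_ncard_of_forall_adj_mem hL.nodup fun _ => hL.mem_of_adj_head (by omega)
  have hB : tdeg G L[p - 1] = B.ncard :=
    tdeg_eq_ncard_of_forall_adj_mem hL.nodup fun _ => hL.mem_of_adj_last (by omega)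
  have hdisj : Disjoint A ((· + 1) '' B) := by
    rw [Set.disjoint_left]
    rintro _ ⟨hi1, hA⟩ ⟨i, ⟨hi, hB⟩, rfl⟩
    exact hL.not_adj_of_crossing hG hlt hi1 hA hB.symm
  have hsub : A ∪ (· + 1) '' B ⊆ Set.Ioo 0 p := by
    rintro k (⟨hk, hadj⟩ | ⟨i, ⟨hi, hadj⟩, rfl⟩)
    · exact ⟨Nat.pos_of_ne_zero (by rintro rfl; exact G.irrefl hadj), hk⟩
    · have : i ≠ p - 1 := by rintro rfl; exact G.irrefl hadj
      exact ⟨Nat.succ_pos i, show i + 1 < p by omega⟩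
  have hfin := (Set.finite_Ioo 0 p).subset hsub
  calc tdeg G L[0] + tdeg G L[p - 1] = A.ncard + ((· + 1) '' B).ncard := by
        rw [hA, hB, Set.ncard_image_of_injective _ (add_left_injective 1)]
    _ = (A ∪ (· + 1) '' B).ncard :=
        (Set.ncard_union_eq hdisj (hfin.subset Set.subset_union_left)
          (hfin.subset Set.subset_union_right)).symm
    _ ≤ (Set.Ioo 0 p).ncard := Set.ncard_le_ncard hsub (Set.finite_Ioo 0 p)
    _ < p := by simp; omega

lemma one_lt_length [Fintype V] (hG : G.Connected) (hV : 1 < Fintype.card V) :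
    1 < L.length := by
  obtain ⟨u, v, huv⟩ := Fintype.exists_pair_of_one_lt_card hV
  obtain ⟨w⟩ := hG.preconnected u v
  obtain ⟨d, -, -, -⟩ := w.exists_boundary_dart {u} rfl huv.symm
  have := hL.length_le [d.fst, d.snd] (List.isChain_pair.mpr d.adj) (by simp [d.adj.ne])
  simp only [List.length_cons, List.length_nil] at this
  omega

lemma card_le_length_add_one [Fintype V] (hG : G.Connected)
    (hσ : ∀ u v : V, u ≠ v → ¬ G.Adj u v →
      (Fintype.card V : ℤ) - 2 ≤ tdeg G u + tdeg G v) :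
    Fintype.card V ≤ L.length + 1 := by
  by_contra! hlt
  have h1 := hL.one_lt_length hG (by omega)
  have hne : L[0] ≠ L[L.length - 1] := fun h => by
    have := hL.nodup.getElem_inj_iff.mp h
    omega
  have hnadj : ¬ G.Adj L[0] L[L.length - 1] :=
    hL.not_adj_of_crossing hG (by omega) h1 (List.isChain_iff_getElem.mp hL.isChain 0 h1)
  have := hσ _ _ hne hnadj
  have := hL.tdeg_add_tdeg_lt hG (by omega) h1
  omega

end IsLongestPath

end SimpleGraph

/-- A connected graph with σ₂ ≥ n - 2 has a spanning tree with at most one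
branch vertex. -/
theorem stmt_13 {V : Type*} [Fintype V] (G : SimpleGraph V) (hG : G.Connected)
    (hσ : ∀ u v : V, u ≠ v → ¬ G.Adj u v →
      (Fintype.card V : ℤ) - 2 ≤ tdeg G u + tdeg G v) :
    ∃ T : SimpleGraph V, T ≤ G ∧ T.IsTree ∧ (branchSet T).ncard ≤ 1 := by
  obtain ⟨L, hL⟩ := exists_isLongestPath G
  have := hG.nonempty
  exact exists_isTree_le_ncard_branchSet_le_one_of_isChain hG hL.isChain hL.nodup hL.ne_nil
    (hL.card_le_length_add_one hG hσ)
end
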